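/- For N_x \ge 1, the polynomial R^n(N_x,N_y,N_z) satisfies the recurrence R^n(N_x, N_y, N_z) = R^n(N_x - 1, N_y, N_z) + x \cdot R^{n-1}(N_x + 1, N_y + 1, N_z + 1) for all n \ge 1. -/

import Mathlib

/-- The binomial coefficient `C(k+N-1, N-1)`, with the convention (from the binomial
series) that for `N = 0` it is the indicator of `k = 0`. -/
def Scoef (N k : ℕ) : ℕ := (k + N - 1).choose k

/-- `S^n(N_x,N_y,N_z)`. -/
def Spoly {R : Type*} [CommRing R] (x y z : R) (n Nx Ny Nz : ℕ) : R :=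
  ∑ a ∈ Finset.range (n + 1), ∑ b ∈ Finset.range (n + 1 - a),
    (Scoef Nx a : R) * (Scoef Ny b : R) * (Scoef Nz (n - a - b) : R)
      * x ^ a * y ^ b * z ^ (n - a - b)

/-- `R^n(N_x,N_y,N_z) = 4 S^n(N_x+n,N_y+n,N_z+n) - S^n(N_x+n+1,N_y+n,N_z+n)
- S^n(N_x+n,N_y+n+1,N_z+n) - S^n(N_x+n,N_y+n,N_z+n+1)`. -/
def Rpoly {R : Type*} [CommRing R] (x y z : R) (n Nx Ny Nz : ℕ) : R :=
  4 * Spoly x y z n (Nx + n) (Ny + n) (Nz + n)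
    - Spoly x y z n (Nx + n + 1) (Ny + n) (Nz + n)
    - Spoly x y z n (Nx + n) (Ny + n + 1) (Nz + n)
    - Spoly x y z n (Nx + n) (Ny + n) (Nz + n + 1)

/-
`S^n(N_x,N_y,N_z)` is the degree-`n` part of `(1-x)^{-N_x} (1-y)^{-N_y} (1-z)^{-N_z}`.
Pascal's rule `C_{N+1}(k+1) = C_N(k+1) + C_{N+1}(k)` is the coefficientwise form of
`(1-x)^{-(N+1)} = (1-x)^{-N} + x (1-x)^{-(N+1)}`, giving
`S^{n}(M+1,N_y,N_z) = S^{n}(M,N_y,N_z) + x S^{n-1}(M+1,N_y,N_z)`. Applied to each of the four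
`S`-terms of `R^n(N_x,N_y,N_z)`, whose first index is at least `1`, this is the recurrence.
-/

open Finset

lemma Scoef_eq_multichoose (N k : ℕ) : Scoef N k = N.multichoose k := by
  rw [Scoef, Nat.multichoose_eq, add_comm]

section

variable {R : Type*} [CommRing R]

/-- The part of `S^n` of degree `k` in `y, z`. -/
def Spoly₂ (y z : R) (k Ny Nz : ℕ) : R :=
  ∑ b ∈ range (k + 1), (Scoef Ny b : R) * (Scoef Nz (k - b) : R) * y ^ b * z ^ (k - b)

lemma Spoly_eq_sum_Spoly₂ (x y z : R) (n Nx Ny Nz : ℕ) :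
    Spoly x y z n Nx Ny Nz =
      ∑ a ∈ range (n + 1), (Scoef Nx a : R) * x ^ a * Spoly₂ y z (n - a) Ny Nz := by
  refine sum_congr rfl fun a ha => ?_
  have hlen : n + 1 - a = n - a + 1 := by have := mem_range.mp ha; omega
  rw [Spoly₂, hlen, mul_sum]
  refine sum_congr rfl fun b _ => ?_
  rw [Nat.sub_sub, ← Nat.sub_sub]
  ring

/-- Pascal's rule, convolved against an arbitrary sequence `f`. -/
lemma sum_multichoose_succ_mul (x : R) (f : ℕ → R) (M m : ℕ) :
    ∑ a ∈ range (m + 2), ((M + 1).multichoose a : R) * x ^ a * f (m + 1 - a) =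
      ∑ a ∈ range (m + 2), (M.multichoose a : R) * x ^ a * f (m + 1 - a) +
        x * ∑ a ∈ range (m + 1), ((M + 1).multichoose a : R) * x ^ a * f (m - a) := by
  rw [sum_range_succ', sum_range_succ' _ (m + 1), mul_sum]
  simp only [Nat.multichoose_succ_succ, Nat.multichoose_zero_right, Nat.add_sub_add_right,
    Nat.cast_add]
  rw [add_right_comm, ← sum_add_distrib]
  congr 1
  refine sum_congr rfl fun a _ => ?_
  ring

lemma Spoly_succ_succ (x y z : R) (m M Ny Nz : ℕ) :
    Spoly x y z (m + 1) (M + 1) Ny Nz =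
      Spoly x y z (m + 1) M Ny Nz + x * Spoly x y z m (M + 1) Ny Nz := by
  simp only [Spoly_eq_sum_Spoly₂, Scoef_eq_multichoose]
  exact sum_multichoose_succ_mul x (fun k => Spoly₂ y z k Ny Nz) M m

end

/-- Recurrence: for `N_x ≥ 1` and `n ≥ 1`,
`R^n(N_x,N_y,N_z) = R^n(N_x-1,N_y,N_z) + x R^{n-1}(N_x+1,N_y+1,N_z+1)`. -/
theorem stmt7 {R : Type*} [CommRing R] (x y z : R)
    (n Nx Ny Nz : ℕ) (hn : 1 ≤ n) (hNx : 1 ≤ Nx) :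
    Rpoly x y z n Nx Ny Nz =
      Rpoly x y z n (Nx - 1) Ny Nz +
        x * Rpoly x y z (n - 1) (Nx + 1) (Ny + 1) (Nz + 1) := by
  obtain ⟨m, rfl⟩ : ∃ m, n = m + 1 := ⟨n - 1, by omega⟩
  obtain ⟨K, rfl⟩ : ∃ K, Nx = K + 1 := ⟨Nx - 1, by omega⟩
  have h₀ := Spoly_succ_succ x y z m (K + m + 1) (Ny + (m + 1)) (Nz + (m + 1))
  have hx := Spoly_succ_succ x y z m (K + m + 2) (Ny + (m + 1)) (Nz + (m + 1))
  have hy := Spoly_succ_succ x y z m (K + m + 1) (Ny + (m + 1) + 1) (Nz + (m + 1))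
  have hz := Spoly_succ_succ x y z m (K + m + 1) (Ny + (m + 1)) (Nz + (m + 1) + 1)
  simp only [Rpoly, Nat.add_sub_cancel]
  ring_nf at h₀ hx hy hz ⊢
  linear_combination 4 * h₀ - hx - hy - hz
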